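/- Let a, b, c, d > 0 with b < d/a, and let t(ρ) = d + a·ln ρ. Then for any constants σ, h, c > 0 the function E(ρ) = -c·ln ρ + (σ/h)·t(ρ)·(2^{bρ/t(ρ)} - 1) is strictly convex on the set {ρ ∈ (0,1] : t(ρ) > 0}. -/

import Mathlib

open Real Set

lemma comb_pos {t1 t2 l m : ℝ} (ht1 : 0 < t1) (ht2 : 0 < t2)
    (hl : 0 ≤ l) (hm : 0 ≤ m) (hs : l + m = 1) : 0 < l * t1 + m * t2 := by
  rcases hl.eq_or_lt with rfl | hl'
  · have hm1 : m = 1 := by linarith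
    simp [hm1, ht2]
  · exact add_pos_of_pos_of_nonneg (mul_pos hl' ht1) (mul_nonneg hm ht2.le)

/-- Perspective-type convexity: `(v, t) ↦ t * (exp (v/t) - 1)` is jointly convex on `t > 0`. -/
lemma persp_ineq (v1 v2 t1 t2 l m : ℝ) (ht1 : 0 < t1) (ht2 : 0 < t2)
    (hl : 0 ≤ l) (hm : 0 ≤ m) (hs : l + m = 1) :
    (l * t1 + m * t2) * (Real.exp ((l * v1 + m * v2) / (l * t1 + m * t2)) - 1) ≤
      l * (t1 * (Real.exp (v1 / t1) - 1)) + m * (t2 * (Real.exp (v2 / t2) - 1)) := by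
  set T := l * t1 + m * t2 with hT
  have hTpos : 0 < T := comb_pos ht1 ht2 hl hm hs
  have w1 : (0:ℝ) ≤ l * t1 / T := by positivity
  have w2 : (0:ℝ) ≤ m * t2 / T := by positivity
  have wsum : l * t1 / T + m * t2 / T = 1 := by field_simp; rw [hT]
  have key := convexOn_exp.2 (Set.mem_univ (v1 / t1)) (Set.mem_univ (v2 / t2)) w1 w2 wsum
  have harg : l * t1 / T * (v1 / t1) + m * t2 / T * (v2 / t2) = (l * v1 + m * v2) / T := by
    field_simp
  simp only [smul_eq_mul] at key
  rw [harg] at key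
  have := mul_le_mul_of_nonneg_left key hTpos.le
  have hexp : T * (l * t1 / T * Real.exp (v1 / t1) + m * t2 / T * Real.exp (v2 / t2)) =
      l * t1 * Real.exp (v1 / t1) + m * t2 * Real.exp (v2 / t2) := by
    field_simp
  rw [hexp] at this
  nlinarith [this]

/-- Monotonicity: `t ↦ t * (exp (v/t) - 1)` is antitone in `t > 0` for `v ≥ 0`. -/
lemma persp_anti (v t t' : ℝ) (hv : 0 ≤ v) (ht : 0 < t) (htt' : t ≤ t') :
    t' * (Real.exp (v / t') - 1) ≤ t * (Real.exp (v / t) - 1) := by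
  have ht' : 0 < t' := lt_of_lt_of_le ht htt'
  rcases eq_or_lt_of_le hv with hv0 | hvpos
  · simp [← hv0]
  rcases eq_or_lt_of_le htt' with rfl | hlt
  · exact le_rfl
  have hw : 0 < v / t' := div_pos hvpos ht'
  have hu : 0 < v / t := div_pos hvpos ht
  have hwu : v / t' < v / t := by
    apply div_lt_div_of_pos_left hvpos ht hlt
  have sec := convexOn_exp.secant_mono (a := (0:ℝ)) (x := v / t') (y := v / t)
    (Set.mem_univ _) (Set.mem_univ _) (Set.mem_univ _) (ne_of_gt hw) (ne_of_gt hu) hwu.le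
  simp only [Real.exp_zero, sub_zero] at sec
  -- sec : (exp (v/t') - 1) / (v/t') ≤ (exp (v/t) - 1) / (v/t)
  have h1 : t' * (Real.exp (v / t') - 1) = v * ((Real.exp (v / t') - 1) / (v / t')) := by
    field_simp
  have h2 : t * (Real.exp (v / t) - 1) = v * ((Real.exp (v / t) - 1) / (v / t)) := by
    field_simp
  rw [h1, h2]
  exact mul_le_mul_of_nonneg_left sec hv

/-- Strict convexity of the total processing energy
`E(ρ) = -c ln ρ + (σ/h) t(ρ) (2^{bρ/t(ρ)} - 1)` with `t(ρ) = d + a ln ρ`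
on `{ρ ∈ (0,1] : t(ρ) > 0}`, for constants `a, b, c, d, σ, h > 0` with `b < d / a`. -/
theorem energy_strictConvex (a b c d σ h : ℝ)
    (ha : 0 < a) (hb : 0 < b) (hc : 0 < c) (hd : 0 < d) (hσ : 0 < σ) (hh : 0 < h)
    (hba : b < d / a) :
    StrictConvexOn ℝ {ρ : ℝ | ρ ∈ Set.Ioc (0 : ℝ) 1 ∧ 0 < d + a * Real.log ρ}
      (fun ρ : ℝ =>
        -c * Real.log ρ +
          (σ / h) * (d + a * Real.log ρ) *
            ((2 : ℝ) ^ (b * ρ / (d + a * Real.log ρ)) - 1)) := by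
  set S : Set ℝ := {ρ : ℝ | ρ ∈ Set.Ioc (0 : ℝ) 1 ∧ 0 < d + a * Real.log ρ} with hS
  have hSeq : S = Set.Ioc (Real.exp (-(d / a))) 1 := by
    ext ρ
    simp only [hS, Set.mem_setOf_eq, Set.mem_Ioc]
    constructor
    · rintro ⟨⟨hρ0, hρ1⟩, ht⟩
      refine ⟨?_, hρ1⟩
      have : -(d / a) < Real.log ρ := by
        rw [neg_lt]
        rw [lt_div_iff₀ ha]
        nlinarith
      calc Real.exp (-(d / a)) < Real.exp (Real.log ρ) := Real.exp_lt_exp.2 this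
        _ = ρ := Real.exp_log hρ0
    · rintro ⟨hρ0, hρ1⟩
      have hpos : 0 < ρ := lt_trans (Real.exp_pos _) hρ0
      have hlog : -(d / a) < Real.log ρ := (Real.lt_log_iff_exp_lt hpos).2 hρ0
      refine ⟨⟨hpos, hρ1⟩, ?_⟩
      have : a * (-(d / a)) < a * Real.log ρ := by
        exact mul_lt_mul_of_pos_left hlog ha
      have had : a * (-(d / a)) = -d := by field_simp
      linarith [had ▸ this]
  have hSconv : Convex ℝ S := hSeq ▸ convex_Ioc _ _
  have hSsub : S ⊆ Set.Ioi (0 : ℝ) := fun ρ hρ => hρ.1.1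
  -- strict convexity of -c log
  have h1 : StrictConvexOn ℝ S (fun ρ : ℝ => -c * Real.log ρ) := by
    refine ⟨hSconv, fun x hx y hy hxy l m hl hm hs => ?_⟩
    have := strictConcaveOn_log_Ioi.2 (hSsub hx) (hSsub hy) hxy hl hm hs
    simp only [smul_eq_mul] at this ⊢
    nlinarith
  -- convexity of the second term
  have h2 : ConvexOn ℝ S (fun ρ : ℝ =>
      (σ / h) * (d + a * Real.log ρ) * ((2 : ℝ) ^ (b * ρ / (d + a * Real.log ρ)) - 1)) := by
    refine ⟨hSconv, fun x hx y hy l m hl hm hs => ?_⟩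
    set z := l * x + m * y with hz
    have hzS : z ∈ S := hSconv hx hy hl hm hs
    have hxpos : 0 < x := hx.1.1
    have hypos : 0 < y := hy.1.1
    have hzpos : 0 < z := hzS.1.1
    set t1 := d + a * Real.log x with ht1def
    set t2 := d + a * Real.log y with ht2def
    set tz := d + a * Real.log z with htzdef
    have ht1 : 0 < t1 := hx.2
    have ht2 : 0 < t2 := hy.2
    have htz : 0 < tz := hzS.2
    have hK : 0 ≤ σ / h := le_of_lt (div_pos hσ hh)
    -- concavity of log ⇒ tz ≥ l*t1 + m*t2
    have hlog : l * Real.log x + m * Real.log y ≤ Real.log z := by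
      have := strictConcaveOn_log_Ioi.concaveOn.2 (hSsub hx) (hSsub hy) hl hm hs
      simpa using this
    have hT : l * t1 + m * t2 ≤ tz := by
      simp only [ht1def, ht2def, htzdef]
      nlinarith
    have hTpos : 0 < l * t1 + m * t2 := comb_pos ht1 ht2 hl hm hs
    -- rewrite rpow as exp
    have hrpow : ∀ r : ℝ, (2 : ℝ) ^ r = Real.exp (Real.log 2 * r) := fun r => by
      rw [Real.rpow_def_of_pos two_pos]
    have hlog2 : 0 < Real.log 2 := Real.log_pos one_lt_two
    -- abbreviations
    have hargz : Real.log 2 * (b * z / tz) = (Real.log 2 * b * z) / tz := by ring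
    have hargx : Real.log 2 * (b * x / t1) = (Real.log 2 * b * x) / t1 := by ring
    have hargy : Real.log 2 * (b * y / t2) = (Real.log 2 * b * y) / t2 := by ring
    set v1 := Real.log 2 * b * x with hv1
    set v2 := Real.log 2 * b * y with hv2
    have hvz : Real.log 2 * b * z = l * v1 + m * v2 := by simp only [hv1, hv2, hz]; ring
    have hv1nn : 0 ≤ v1 := by positivity
    have hv2nn : 0 ≤ v2 := by positivity
    have hvznn : 0 ≤ l * v1 + m * v2 := by positivity
    -- step 1: anti in t
    have step1 : tz * (Real.exp ((l * v1 + m * v2) / tz) - 1) ≤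
        (l * t1 + m * t2) * (Real.exp ((l * v1 + m * v2) / (l * t1 + m * t2)) - 1) :=
      persp_anti _ _ _ hvznn hTpos hT
    -- step 2: joint convexity
    have step2 := persp_ineq v1 v2 t1 t2 l m ht1 ht2 hl hm hs
    simp only [smul_eq_mul]
    rw [hrpow, hrpow, hrpow, hargz, hargx, hargy, hvz]
    calc σ / h * tz * (Real.exp ((l * v1 + m * v2) / tz) - 1)
        ≤ σ / h * ((l * t1 + m * t2) * (Real.exp ((l * v1 + m * v2) / (l * t1 + m * t2)) - 1)) := by
          rw [mul_assoc]
          exact mul_le_mul_of_nonneg_left step1 hK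
      _ ≤ σ / h * (l * (t1 * (Real.exp (v1 / t1) - 1)) + m * (t2 * (Real.exp (v2 / t2) - 1))) :=
          mul_le_mul_of_nonneg_left step2 hK
      _ = l * (σ / h * t1 * (Real.exp (v1 / t1) - 1)) + m * (σ / h * t2 * (Real.exp (v2 / t2) - 1)) := by
          ring
  exact h1.add_convexOn h2
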